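/- Let μ be a Borel probability measure on [0,1]. The generalized quantum Hellinger divergence φ_μ is jointly convex on pairs of positive definite n×n complex matrices: for all positive definite A₁, A₂, B₁, B₂ and all t ∈ [0,1], φ_μ(tA₁+(1-t)A₂, tB₁+(1-t)B₂) ≤ t·φ_μ(A₁,B₁) + (1-t)·φ_μ(A₂,B₂). -/

import Mathlib

open MeasureTheory Matrix
open scoped ComplexOrder

/-- `f_μ(x) = ∫_{[0,1]} x / ((1-λ)x + λ) dμ(λ)`. -/
noncomputable def fmu (μ : Measure ℝ) (x : ℝ) : ℝ := ∫ l, x / ((1 - l) * x + l) ∂μ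

/-- The center of mass `c(μ) = ∫_{[0,1]} λ dμ(λ)`. -/
noncomputable def cmu (μ : Measure ℝ) : ℝ := ∫ l, l ∂μ

/-- The positive square root of a positive definite matrix, via functional calculus. -/
noncomputable def matSqrt {n : ℕ} (A : Matrix (Fin n) (Fin n) ℂ) : Matrix (Fin n) (Fin n) ℂ :=
  cfc Real.sqrt A

/-- The Kubo–Ando mean `A σ_μ B = A^{1/2} f_μ(A^{-1/2} B A^{-1/2}) A^{1/2}`. -/
noncomputable def kuboAndo {n : ℕ} (μ : Measure ℝ) (A B : Matrix (Fin n) (Fin n) ℂ) :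
    Matrix (Fin n) (Fin n) ℂ :=
  matSqrt A * cfc (fmu μ) ((matSqrt A)⁻¹ * B * (matSqrt A)⁻¹) * matSqrt A

/-- The generalized quantum Hellinger divergence
`φ_μ(A,B) = Tr((1-c(μ))A + c(μ)B - A σ_μ B)`. -/
noncomputable def qhd {n : ℕ} (μ : Measure ℝ) (A B : Matrix (Fin n) (Fin n) ℂ) : ℝ :=
  (((1 - cmu μ) • A + cmu μ • B - kuboAndo μ A B).trace).re

/-!
Write `A !_λ B = ((1-λ)A⁻¹ + λB⁻¹)⁻¹` for the weighted harmonic mean. If `B = A^{1/2} M A^{1/2}`,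
then `A !_λ B = A^{1/2} g_λ(M) A^{1/2}` with `g_λ(x) = x / ((1-λ)x + λ)`, while
`A σ_μ B = A^{1/2} f_μ(M) A^{1/2}` and `f_μ = ∫ g_λ dμ(λ)`; hence
`Tr(A σ_μ B) = ∫ Tr(A !_λ B) dμ(λ)`.

The harmonic mean is jointly concave in the Loewner order: `A !_λ B` is the minimum of
`(1-λ) Y*AY + λ Z*BZ` over `(1-λ)Y + λZ = 1`, attained at `Y = A⁻¹(A !_λ B)`, `Z = B⁻¹(A !_λ B)`,
and for fixed `Y, Z` this expression is affine in `(A, B)`. Integrating, `Tr(A σ_μ B)` is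
jointly concave, and `φ_μ` is a linear function minus it.
-/

open scoped MatrixOrder

lemma min_le_one_sub_mul_add (x : ℝ) {l : ℝ} (hl0 : 0 ≤ l) (hl1 : l ≤ 1) :
    min x 1 ≤ (1 - l) * x + l := by
  nlinarith [min_le_left x 1, min_le_right x 1]

lemma one_sub_mul_add_pos {x l : ℝ} (hx : 0 < x) (hl0 : 0 ≤ l) (hl1 : l ≤ 1) :
    0 < (1 - l) * x + l :=
  (lt_min hx one_pos).trans_le (min_le_one_sub_mul_add x hl0 hl1)

lemma integrable_div_one_sub_mul_add {μ : Measure ℝ} [IsFiniteMeasure μ]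
    (hμ : ∀ᵐ l ∂μ, l ∈ Set.Icc (0 : ℝ) 1) {x : ℝ} (hx : 0 < x) :
    Integrable (fun l => x / ((1 - l) * x + l)) μ := by
  refine Integrable.mono' (integrable_const (x / min x 1))
    (Measurable.aestronglyMeasurable (by fun_prop)) ?_
  filter_upwards [hμ] with l ⟨hl0, hl1⟩
  rw [Real.norm_of_nonneg (div_nonneg hx.le (one_sub_mul_add_pos hx hl0 hl1).le)]
  exact div_le_div_of_nonneg_left hx.le (lt_min hx one_pos) (min_le_one_sub_mul_add x hl0 hl1)

namespace Matrix

lemma PosDef.smul_add_smul {ι : Type*} {A B : Matrix ι ι ℂ} (hA : A.PosDef) (hB : B.PosDef)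
    {a b : ℝ} (ha : 0 ≤ a) (hb : 0 ≤ b) (hab : a + b = 1) : (a • A + b • B).PosDef := by
  rcases ha.eq_or_lt with rfl | ha
  · simpa [show b = 1 by linarith] using hB
  · exact (hA.smul ha).add_posSemidef (hB.posSemidef.smul hb)

section Trace

variable {ι : Type*} [Fintype ι]

lemma re_trace_smul_add_smul (A B : Matrix ι ι ℂ) (a b : ℝ) :
    (a • A + b • B).trace.re = a * A.trace.re + b * B.trace.re := by
  simp [trace_add, trace_smul]

lemma re_trace_mono {A B : Matrix ι ι ℂ} (h : A ≤ B) : A.trace.re ≤ B.trace.re :=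
  (Complex.le_def.mp ((tracePositiveLinearMap ι ℂ ℂ).mono h)).1

end Trace

variable {ι : Type*} [Fintype ι] [DecidableEq ι]

lemma PosDef.isUnit_det {A : Matrix ι ι ℂ} (hA : A.PosDef) : IsUnit A.det :=
  (isUnit_iff_isUnit_det A).mp hA.isUnit

lemma PosDef.pos_of_mem_spectrum {A : Matrix ι ι ℂ} (hA : A.PosDef) {x : ℝ}
    (hx : x ∈ spectrum ℝ A) : 0 < x := by
  obtain ⟨i, rfl⟩ := hA.isHermitian.spectrum_real_eq_range_eigenvalues ▸ hx
  exact hA.eigenvalues_pos i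

section FunctionalCalculus

lemma continuousOn_spectrum_real (A : Matrix ι ι ℂ) (f : ℝ → ℝ) :
    ContinuousOn f (spectrum ℝ A) :=
  A.finite_real_spectrum.continuousOn f

lemma inv_cfc {M : Matrix ι ι ℂ} (hM : M.IsHermitian) {f : ℝ → ℝ}
    (hf : ∀ x ∈ spectrum ℝ M, f x ≠ 0) : (cfc f M)⁻¹ = cfc (fun x => (f x)⁻¹) M := by
  rw [nonsing_inv_eq_ringInverse]
  exact (cfc_inv f M hf (M.continuousOn_spectrum_real f) hM).symm

lemma re_trace_cfc_mul {M : Matrix ι ι ℂ} (hM : M.IsHermitian) (f : ℝ → ℝ) (C : Matrix ι ι ℂ) :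
    (cfc f M * C).trace.re = ∑ i, f (hM.eigenvalues i) *
      ((star (hM.eigenvectorUnitary : Matrix ι ι ℂ) * C * hM.eigenvectorUnitary) i i).re := by
  rw [hM.cfc_eq, IsHermitian.cfc, Unitary.conjStarAlgAut_apply, mul_assoc, trace_mul_cycle]
  simp [trace, mul_diagonal, Complex.re_sum, mul_comm]

variable {α : Type*} [MeasurableSpace α] {μ : Measure α}

lemma integrable_re_trace_cfc_mul {M : Matrix ι ι ℂ} (hM : M.IsHermitian) (C : Matrix ι ι ℂ)
    {g : α → ℝ → ℝ} (hg : ∀ x ∈ spectrum ℝ M, Integrable (fun a => g a x) μ) :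
    Integrable (fun a => (cfc (g a) M * C).trace.re) μ := by
  simp_rw [re_trace_cfc_mul hM]
  exact integrable_finsetSum _ fun i _ =>
    (hg _ (hM.eigenvalues_mem_spectrum_real i)).mul_const _

lemma integral_re_trace_cfc_mul {M : Matrix ι ι ℂ} (hM : M.IsHermitian) (C : Matrix ι ι ℂ)
    {g : α → ℝ → ℝ} (hg : ∀ x ∈ spectrum ℝ M, Integrable (fun a => g a x) μ) :
    ∫ a, (cfc (g a) M * C).trace.re ∂μ = (cfc (fun x => ∫ a, g a x ∂μ) M * C).trace.re := by
  simp_rw [re_trace_cfc_mul hM]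
  rw [integral_finsetSum _ fun i _ => (hg _ (hM.eigenvalues_mem_spectrum_real i)).mul_const _]
  simp_rw [integral_mul_const]

end FunctionalCalculus

section HarmonicMean

noncomputable def harmonicMean (l : ℝ) (A B : Matrix ι ι ℂ) : Matrix ι ι ℂ :=
  ((1 - l) • A⁻¹ + l • B⁻¹)⁻¹

lemma conjTranspose_mul_mul_add_inv_mul {A S : Matrix ι ι ℂ} (hA : A.PosDef)
    (hS : S.IsHermitian) (U : Matrix ι ι ℂ) :
    (U + A⁻¹ * S)ᴴ * A * (U + A⁻¹ * S) = Uᴴ * A * U + (Uᴴ * S + S * U) + S * A⁻¹ * S := by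
  simp only [conjTranspose_add, conjTranspose_mul, hS.eq, hA.inv.isHermitian.eq, add_mul,
    mul_add, mul_assoc, mul_nonsing_inv_cancel_left (h := hA.isUnit_det),
    nonsing_inv_mul_cancel_left (h := hA.isUnit_det)]
  abel

variable {A B : Matrix ι ι ℂ} {l : ℝ}

lemma posDef_smul_inv_add_smul_inv (hA : A.PosDef) (hB : B.PosDef) (hl0 : 0 ≤ l) (hl1 : l ≤ 1) :
    ((1 - l) • A⁻¹ + l • B⁻¹).PosDef :=
  hA.inv.smul_add_smul hB.inv (by linarith) hl0 (sub_add_cancel 1 l)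

lemma isHermitian_harmonicMean (hA : A.PosDef) (hB : B.PosDef) (hl0 : 0 ≤ l) (hl1 : l ≤ 1) :
    (harmonicMean l A B).IsHermitian :=
  (posDef_smul_inv_add_smul_inv hA hB hl0 hl1).inv.isHermitian

lemma smul_inv_mul_harmonicMean_add (hA : A.PosDef) (hB : B.PosDef) (hl0 : 0 ≤ l) (hl1 : l ≤ 1) :
    (1 - l) • (A⁻¹ * harmonicMean l A B) + l • (B⁻¹ * harmonicMean l A B) = 1 := by
  rw [← smul_mul_assoc, ← smul_mul_assoc, ← add_mul, harmonicMean,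
    mul_nonsing_inv _ (posDef_smul_inv_add_smul_inv hA hB hl0 hl1).isUnit_det]

lemma harmonicMean_eq (hA : A.PosDef) (hB : B.PosDef) (hl0 : 0 ≤ l) (hl1 : l ≤ 1) :
    (1 - l) • ((A⁻¹ * harmonicMean l A B)ᴴ * A * (A⁻¹ * harmonicMean l A B))
      + l • ((B⁻¹ * harmonicMean l A B)ᴴ * B * (B⁻¹ * harmonicMean l A B))
      = harmonicMean l A B := by
  set H := harmonicMean l A B
  have hH := isHermitian_harmonicMean hA hB hl0 hl1
  have hAH := conjTranspose_mul_mul_add_inv_mul hA hH 0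
  have hBH := conjTranspose_mul_mul_add_inv_mul hB hH 0
  simp only [zero_add, conjTranspose_zero, zero_mul, mul_zero, add_zero] at hAH hBH
  rw [hAH, hBH]
  simpa [mul_add, mul_smul_comm, mul_assoc] using
    congrArg (H * ·) (smul_inv_mul_harmonicMean_add hA hB hl0 hl1)

lemma harmonicMean_le (hA : A.PosDef) (hB : B.PosDef) (hl0 : 0 ≤ l) (hl1 : l ≤ 1)
    {Y Z : Matrix ι ι ℂ} (hYZ : (1 - l) • Y + l • Z = 1) :
    harmonicMean l A B ≤ (1 - l) • (Yᴴ * A * Y) + l • (Zᴴ * B * Z) := by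
  set H := harmonicMean l A B
  have hH := isHermitian_harmonicMean hA hB hl0 hl1
  have hW := smul_inv_mul_harmonicMean_add hA hB hl0 hl1
  obtain ⟨U, rfl⟩ : ∃ U, Y = U + A⁻¹ * H := ⟨Y - A⁻¹ * H, by abel⟩
  obtain ⟨V, rfl⟩ : ∃ V, Z = V + B⁻¹ * H := ⟨Z - B⁻¹ * H, by abel⟩
  have hUV : (1 - l) • U + l • V = 0 := by linear_combination (norm := module) hYZ - hW
  have hUVH : (1 - l) • (Uᴴ * H) + l • (Vᴴ * H) = 0 := by
    simpa [add_mul, smul_mul_assoc] using congrArg (fun X => Xᴴ * H) hUV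
  have hHUV : (1 - l) • (H * U) + l • (H * V) = 0 := by
    simpa [mul_add, mul_smul_comm] using congrArg (H * ·) hUV
  have hHWH : (1 - l) • (H * A⁻¹ * H) + l • (H * B⁻¹ * H) = H := by
    simpa [mul_add, mul_smul_comm, mul_assoc] using congrArg (H * ·) hW
  -- completing the square around the minimiser `(A⁻¹ H, B⁻¹ H)`
  have hgap : (1 - l) • ((U + A⁻¹ * H)ᴴ * A * (U + A⁻¹ * H))
      + l • ((V + B⁻¹ * H)ᴴ * B * (V + B⁻¹ * H)) - H
      = (1 - l) • (Uᴴ * A * U) + l • (Vᴴ * B * V) := by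
    rw [conjTranspose_mul_mul_add_inv_mul hA hH, conjTranspose_mul_mul_add_inv_mul hB hH]
    linear_combination (norm := module) hUVH + hHUV + hHWH
  rw [le_iff, hgap]
  exact ((hA.posSemidef.conjTranspose_mul_mul_same U).smul (by linarith)).add
    ((hB.posSemidef.conjTranspose_mul_mul_same V).smul hl0)

lemma harmonicMean_jointly_concave {A₁ A₂ B₁ B₂ : Matrix ι ι ℂ}
    (hA₁ : A₁.PosDef) (hA₂ : A₂.PosDef) (hB₁ : B₁.PosDef) (hB₂ : B₂.PosDef)
    {t : ℝ} (ht0 : 0 ≤ t) (ht1 : t ≤ 1) (hl0 : 0 ≤ l) (hl1 : l ≤ 1) :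
    t • harmonicMean l A₁ B₁ + (1 - t) • harmonicMean l A₂ B₂
      ≤ harmonicMean l (t • A₁ + (1 - t) • A₂) (t • B₁ + (1 - t) • B₂) := by
  have hA := hA₁.smul_add_smul hA₂ ht0 (sub_nonneg.2 ht1) (add_sub_cancel t 1)
  have hB := hB₁.smul_add_smul hB₂ ht0 (sub_nonneg.2 ht1) (add_sub_cancel t 1)
  set H := harmonicMean l (t • A₁ + (1 - t) • A₂) (t • B₁ + (1 - t) • B₂)
  set Y := (t • A₁ + (1 - t) • A₂)⁻¹ * H
  set Z := (t • B₁ + (1 - t) • B₂)⁻¹ * H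
  have hYZ : (1 - l) • Y + l • Z = 1 := smul_inv_mul_harmonicMean_add hA hB hl0 hl1
  have h₁ := harmonicMean_le hA₁ hB₁ hl0 hl1 hYZ
  have h₂ := harmonicMean_le hA₂ hB₂ hl0 hl1 hYZ
  have hH : (1 - l) • (Yᴴ * (t • A₁ + (1 - t) • A₂) * Y)
      + l • (Zᴴ * (t • B₁ + (1 - t) • B₂) * Z) = H :=
    harmonicMean_eq hA hB hl0 hl1
  rw [le_iff] at h₁ h₂ ⊢
  convert (h₁.smul ht0).add (h₂.smul (sub_nonneg.2 ht1)) using 1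
  rw [← hH]
  simp only [mul_add, add_mul, smul_mul_assoc, mul_smul_comm]
  module

lemma harmonicMean_mul_self_mul_mul_self {R M : Matrix ι ι ℂ} (hR : IsUnit R.det)
    (hM : M.PosDef) (hl0 : 0 ≤ l) (hl1 : l ≤ 1) :
    harmonicMean l (R * R) (R * M * R) = R * cfc (fun x => x / ((1 - l) * x + l)) M * R := by
  have hMinv : M⁻¹ = cfc (fun x : ℝ => x⁻¹) M := by
    have h := inv_cfc hM.isHermitian (f := fun x => x) fun x hx => (hM.pos_of_mem_spectrum hx).ne'
    rwa [cfc_id' ℝ M hM.isHermitian.isSelfAdjoint] at h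
  have hW : (1 - l) • (R * R)⁻¹ + l • (R * M * R)⁻¹
      = R⁻¹ * cfc (fun x => (1 - l) + l * x⁻¹) M * R⁻¹ := by
    rw [cfc_add _ _ _ (M.continuousOn_spectrum_real _) (M.continuousOn_spectrum_real _),
      cfc_const (1 - l) M hM.isHermitian.isSelfAdjoint,
      cfc_const_mul l _ M (M.continuousOn_spectrum_real _), ← hMinv,
      Algebra.algebraMap_eq_smul_one, Matrix.mul_inv_rev, Matrix.mul_inv_rev, Matrix.mul_inv_rev]
    simp only [mul_add, add_mul, smul_mul_assoc, mul_smul_comm, mul_one, mul_assoc]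
  have hpos : ∀ x ∈ spectrum ℝ M, 0 < (1 - l) + l * x⁻¹ := fun x hx => by
    have hx := hM.pos_of_mem_spectrum hx
    have := one_sub_mul_add_pos hx hl0 hl1
    rw [show (1 - l) + l * x⁻¹ = ((1 - l) * x + l) / x by field_simp]
    positivity
  rw [harmonicMean, hW, Matrix.mul_inv_rev, Matrix.mul_inv_rev, nonsing_inv_nonsing_inv _ hR,
    inv_cfc hM.isHermitian fun x hx => (hpos x hx).ne', ← mul_assoc]
  congr 2
  refine cfc_congr fun x hx => ?_
  have hx := (hM.pos_of_mem_spectrum hx).ne'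
  rw [← inv_div]
  field_simp

end HarmonicMean

end Matrix

open Matrix

section KuboAndo

variable {n : ℕ} {A B : Matrix (Fin n) (Fin n) ℂ}

lemma isHermitian_matSqrt (A : Matrix (Fin n) (Fin n) ℂ) : (matSqrt A).IsHermitian :=
  cfc_predicate _ _

lemma matSqrt_mul_self (hA : A.PosDef) : matSqrt A * matSqrt A = A := by
  rw [matSqrt, ← cfc_mul Real.sqrt Real.sqrt A (A.continuousOn_spectrum_real _)
    (A.continuousOn_spectrum_real _),
    cfc_congr (g := fun x => x) fun x hx => Real.mul_self_sqrt (hA.pos_of_mem_spectrum hx).le,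
    cfc_id' ℝ A]

lemma isUnit_det_matSqrt (hA : A.PosDef) : IsUnit (matSqrt A).det :=
  isUnit_of_mul_isUnit_left (by rw [← det_mul, matSqrt_mul_self hA]; exact hA.isUnit_det)

lemma trace_matSqrt_mul_mul_matSqrt (hA : A.PosDef) (X : Matrix (Fin n) (Fin n) ℂ) :
    (matSqrt A * X * matSqrt A).trace = (X * A).trace := by
  rw [trace_mul_cycle, matSqrt_mul_self hA, trace_mul_comm]

lemma posDef_inv_matSqrt_mul_mul_inv_matSqrt (hA : A.PosDef) (hB : B.PosDef) :
    ((matSqrt A)⁻¹ * B * (matSqrt A)⁻¹).PosDef := by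
  have hinj : Function.Injective (matSqrt A)⁻¹.mulVec :=
    mulVec_injective_iff_isUnit.2
      (isUnit_nonsing_inv_iff.2 ((isUnit_iff_isUnit_det _).2 (isUnit_det_matSqrt hA)))
  simpa [conjTranspose_nonsing_inv, (isHermitian_matSqrt A).eq] using
    hB.conjTranspose_mul_mul_same hinj

lemma harmonicMean_eq_matSqrt_mul_cfc_mul_matSqrt (hA : A.PosDef) (hB : B.PosDef) {l : ℝ}
    (hl0 : 0 ≤ l) (hl1 : l ≤ 1) :
    harmonicMean l A B = matSqrt A *
      cfc (fun x => x / ((1 - l) * x + l)) ((matSqrt A)⁻¹ * B * (matSqrt A)⁻¹) * matSqrt A := by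
  have hR := isUnit_det_matSqrt hA
  have hBM : B = matSqrt A * ((matSqrt A)⁻¹ * B * (matSqrt A)⁻¹) * matSqrt A := by
    rw [mul_assoc, mul_assoc, nonsing_inv_mul _ hR, mul_one, mul_nonsing_inv_cancel_left _ _ hR]
  conv_lhs => rw [← matSqrt_mul_self hA, hBM]
  exact harmonicMean_mul_self_mul_mul_self hR (posDef_inv_matSqrt_mul_mul_inv_matSqrt hA hB)
    hl0 hl1

variable {μ : Measure ℝ}

lemma re_trace_harmonicMean_ae_eq (hμ : ∀ᵐ l ∂μ, l ∈ Set.Icc (0 : ℝ) 1) (hA : A.PosDef)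
    (hB : B.PosDef) :
    (fun l => (harmonicMean l A B).trace.re) =ᵐ[μ] fun l =>
      (cfc (fun x => x / ((1 - l) * x + l)) ((matSqrt A)⁻¹ * B * (matSqrt A)⁻¹) * A).trace.re := by
  filter_upwards [hμ] with l ⟨hl0, hl1⟩
  rw [harmonicMean_eq_matSqrt_mul_cfc_mul_matSqrt hA hB hl0 hl1, trace_matSqrt_mul_mul_matSqrt hA]

variable [IsFiniteMeasure μ]

lemma integrable_re_trace_harmonicMean (hμ : ∀ᵐ l ∂μ, l ∈ Set.Icc (0 : ℝ) 1) (hA : A.PosDef)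
    (hB : B.PosDef) : Integrable (fun l => (harmonicMean l A B).trace.re) μ := by
  have hM := posDef_inv_matSqrt_mul_mul_inv_matSqrt hA hB
  refine (integrable_re_trace_cfc_mul hM.isHermitian A fun x hx => ?_).congr
    (re_trace_harmonicMean_ae_eq hμ hA hB).symm
  exact integrable_div_one_sub_mul_add hμ (hM.pos_of_mem_spectrum hx)

lemma integral_re_trace_harmonicMean (hμ : ∀ᵐ l ∂μ, l ∈ Set.Icc (0 : ℝ) 1) (hA : A.PosDef)
    (hB : B.PosDef) : ∫ l, (harmonicMean l A B).trace.re ∂μ = (kuboAndo μ A B).trace.re := by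
  have hM := posDef_inv_matSqrt_mul_mul_inv_matSqrt hA hB
  rw [integral_congr_ae (re_trace_harmonicMean_ae_eq hμ hA hB),
    integral_re_trace_cfc_mul hM.isHermitian A fun x hx =>
      integrable_div_one_sub_mul_add hμ (hM.pos_of_mem_spectrum hx),
    kuboAndo, trace_matSqrt_mul_mul_matSqrt hA]
  rfl

lemma re_trace_kuboAndo_jointly_concave (hμ : ∀ᵐ l ∂μ, l ∈ Set.Icc (0 : ℝ) 1)
    {A₁ A₂ B₁ B₂ : Matrix (Fin n) (Fin n) ℂ}
    (hA₁ : A₁.PosDef) (hA₂ : A₂.PosDef) (hB₁ : B₁.PosDef) (hB₂ : B₂.PosDef)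
    {t : ℝ} (ht0 : 0 ≤ t) (ht1 : t ≤ 1) :
    t * (kuboAndo μ A₁ B₁).trace.re + (1 - t) * (kuboAndo μ A₂ B₂).trace.re
      ≤ (kuboAndo μ (t • A₁ + (1 - t) • A₂) (t • B₁ + (1 - t) • B₂)).trace.re := by
  have hA := hA₁.smul_add_smul hA₂ ht0 (sub_nonneg.2 ht1) (add_sub_cancel t 1)
  have hB := hB₁.smul_add_smul hB₂ ht0 (sub_nonneg.2 ht1) (add_sub_cancel t 1)
  have h₁ := (integrable_re_trace_harmonicMean hμ hA₁ hB₁).const_mul t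
  have h₂ := (integrable_re_trace_harmonicMean hμ hA₂ hB₂).const_mul (1 - t)
  rw [← integral_re_trace_harmonicMean hμ hA₁ hB₁, ← integral_re_trace_harmonicMean hμ hA₂ hB₂,
    ← integral_re_trace_harmonicMean hμ hA hB, ← integral_const_mul, ← integral_const_mul,
    ← integral_add h₁ h₂]
  refine integral_mono_ae (h₁.add h₂) (integrable_re_trace_harmonicMean hμ hA hB) ?_
  filter_upwards [hμ] with l ⟨hl0, hl1⟩
  rw [← re_trace_smul_add_smul]
  exact re_trace_mono (harmonicMean_jointly_concave hA₁ hA₂ hB₁ hB₂ ht0 ht1 hl0 hl1)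

end KuboAndo

lemma qhd_eq {n : ℕ} (μ : Measure ℝ) (A B : Matrix (Fin n) (Fin n) ℂ) :
    qhd μ A B = (1 - cmu μ) * A.trace.re + cmu μ * B.trace.re - (kuboAndo μ A B).trace.re := by
  rw [qhd, trace_sub, Complex.sub_re, re_trace_smul_add_smul]

/-- The generalized quantum Hellinger divergence `φ_μ` is jointly convex on
pairs of positive definite matrices. -/
theorem qhd_jointly_convex {n : ℕ} (μ : Measure ℝ) [IsProbabilityMeasure μ]
    (hμ01 : μ (Set.Icc (0 : ℝ) 1) = 1)
    (A₁ A₂ B₁ B₂ : Matrix (Fin n) (Fin n) ℂ)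
    (hA₁ : A₁.PosDef) (hA₂ : A₂.PosDef) (hB₁ : B₁.PosDef) (hB₂ : B₂.PosDef)
    (t : ℝ) (ht0 : 0 ≤ t) (ht1 : t ≤ 1) :
    qhd μ (t • A₁ + (1 - t) • A₂) (t • B₁ + (1 - t) • B₂) ≤
      t * qhd μ A₁ B₁ + (1 - t) * qhd μ A₂ B₂ := by
  have hμ : ∀ᵐ l ∂μ, l ∈ Set.Icc (0 : ℝ) 1 :=
    (ae_mem_iff_measure_eq measurableSet_Icc.nullMeasurableSet).2 (by rw [hμ01, measure_univ])
  have hK := re_trace_kuboAndo_jointly_concave hμ hA₁ hA₂ hB₁ hB₂ ht0 ht1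
  simp only [qhd_eq, re_trace_smul_add_smul]
  linear_combination hK
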